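/- Let W be a complex vector space, N a positive integer, and i ∈ ℤ. Let a, b ∈ Ē(W) and c₀, c₁ ∈ F(W), and assume that a_k = 0 whenever k ≢ i (mod N) and that for all k ∈ ℤ with k ≡ i (mod N) and all l ∈ ℤ, the operator identity [a_k, b_l] = (c₀)_{k+l} + (k/N)·(c₁)_{k+l−N} holds in End(W). Then c₀, c₁ ∈ Ē(W), and for all k ≡ i (mod N) and all l ∈ ℤ one has [(ψ_R(a))_k, (ψ_R(b))_l] = (ψ_R(c₀))_{k+l} + (k/N)·(ψ_R(c₁))_{k+l−N}. -/

import Mathlib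

open scoped TensorProduct

noncomputable section
namespace Twisted

variable (N : ℕ) (W : Type) [AddCommGroup W] [Module ℂ W]

/-- The shift operator on `F(W) = (ℤ → End W)`, encoding multiplication by `x`:
`(x·a)_k = a_{k+N}`. -/
def shiftE : Module.End ℂ (ℤ → Module.End ℂ W) where
  toFun a := fun k => a (k + N)
  map_add' _ _ := rfl
  map_smul' _ _ := rfl

/-- The action of `ℂ[x]` on `F(W)`. -/
def polyAct (p : Polynomial ℂ) (a : ℤ → Module.End ℂ W) : ℤ → Module.End ℂ W :=
  Polynomial.aeval (shiftE N W) p a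

/-- Membership in `E(W)`. -/
def memE (a : ℤ → Module.End ℂ W) : Prop :=
  ∀ w : W, ∃ M : ℤ, ∀ k ≥ M, a k w = 0

/-- Membership in `Ē(W)`. -/
def memEbar (a : ℤ → Module.End ℂ W) : Prop :=
  ∃ p : Polynomial ℂ, p ≠ 0 ∧ memE W (polyAct N W p a)

/-- Membership in `Ē₀(W)`. -/
def memE0 (a : ℤ → Module.End ℂ W) : Prop :=
  ∃ p : Polynomial ℂ, p ≠ 0 ∧ polyAct N W p a = 0

/-! The key fact is `E(W) ∩ Ē₀(W) = 0`: a sequence killed by a nonzero polynomial in the shift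
satisfies a linear recurrence, and running it backwards from the region where the sequence
vanishes forces it to vanish everywhere. Each side of the commutator identity is built from the
data by operations that preserve both `E(W)` and `Ē₀(W)` (index shifts, scalars, commutators with
a fixed operator), so for the projections the difference of the two sides lies in
`E(W) ∩ Ē₀(W)`. This is applied first in `l`, projecting `b, c₀, c₁`, and then in `k`,
projecting `a`; there the support condition on `a` keeps `k ↦ [a_k, ψ_R(b)_l]` in `E(W)`.
That `c₀, c₁ ∈ Ē(W)` follows by solving the identities at `k = i` and `k = i + N` for them. -/

/-- `e` is `ψ_R(x)`: the component of `x` in `E(W)` for `Ē(W) = E(W) ⊕ Ē₀(W)`. -/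
def IsProjE (x e : ℤ → Module.End ℂ W) : Prop :=
  memE W e ∧ memE0 N W (x - e)

variable {N W}

lemma shiftE_pow_apply (j : ℕ) (a : ℤ → Module.End ℂ W) (k : ℤ) :
    (shiftE N W ^ j) a k = a (k + j * N) := by
  induction j generalizing a with
  | zero => simp
  | succ j ih =>
    rw [pow_succ, Module.End.mul_apply, ih]
    simp only [shiftE, LinearMap.coe_mk, AddHom.coe_mk]
    push_cast
    ring_nf

lemma polyAct_apply (p : Polynomial ℂ) (a : ℤ → Module.End ℂ W) (k : ℤ) :
    polyAct N W p a k = ∑ j ∈ Finset.range (p.natDegree + 1), p.coeff j • a (k + j * N) := by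
  simp only [polyAct, Polynomial.aeval_eq_sum_range, LinearMap.sum_apply, Finset.sum_apply,
    LinearMap.smul_apply, Pi.smul_apply, shiftE_pow_apply]

lemma polyAct_mul (p q : Polynomial ℂ) (a : ℤ → Module.End ℂ W) :
    polyAct N W (p * q) a = polyAct N W p (polyAct N W q a) := by
  simp only [polyAct, map_mul, Module.End.mul_apply]

lemma polyAct_add (p : Polynomial ℂ) (a b : ℤ → Module.End ℂ W) :
    polyAct N W p (a + b) = polyAct N W p a + polyAct N W p b :=
  map_add _ a b

lemma polyAct_sub (p : Polynomial ℂ) (a b : ℤ → Module.End ℂ W) :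
    polyAct N W p (a - b) = polyAct N W p a - polyAct N W p b :=
  map_sub _ a b

lemma polyAct_smul (p : Polynomial ℂ) (s : ℂ) (a : ℤ → Module.End ℂ W) :
    polyAct N W p (s • a) = s • polyAct N W p a :=
  map_smul _ s a

lemma polyAct_zero (p : Polynomial ℂ) : polyAct N W p 0 = 0 :=
  map_zero _

lemma polyAct_comp_add_left (p : Polynomial ℂ) (a : ℤ → Module.End ℂ W) (c : ℤ) :
    polyAct N W p (fun m => a (c + m)) = fun k => polyAct N W p a (c + k) := by
  funext k
  simp only [polyAct_apply, add_assoc]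

lemma polyAct_map (p : Polynomial ℂ) (φ : Module.End ℂ (Module.End ℂ W))
    (a : ℤ → Module.End ℂ W) :
    polyAct N W p (fun m => φ (a m)) = fun k => φ (polyAct N W p a k) := by
  funext k
  simp only [polyAct_apply, map_sum, map_smul]

lemma polyAct_commutator (p : Polynomial ℂ) (A : Module.End ℂ W) (a : ℤ → Module.End ℂ W) :
    polyAct N W p (fun m => A * a m - a m * A)
      = fun k => A * polyAct N W p a k - polyAct N W p a k * A :=
  polyAct_map p (LinearMap.mulLeft ℂ A - LinearMap.mulRight ℂ A) a

lemma memE.sub {x y : ℤ → Module.End ℂ W} (hx : memE W x) (hy : memE W y) :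
    memE W (x - y) := fun w => by
  obtain ⟨M, hM⟩ := hx w
  obtain ⟨M', hM'⟩ := hy w
  exact ⟨max M M', fun k hk => by simp [hM k (le_of_max_le_left hk), hM' k (le_of_max_le_right hk)]⟩

lemma memE.smul {x : ℤ → Module.End ℂ W} (s : ℂ) (hx : memE W x) : memE W (s • x) := fun w => by
  obtain ⟨M, hM⟩ := hx w
  exact ⟨M, fun k hk => by simp [hM k hk]⟩

lemma memE.mul_left {x : ℤ → Module.End ℂ W} (A : Module.End ℂ W) (hx : memE W x) :
    memE W (fun k => A * x k) := fun w => by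
  obtain ⟨M, hM⟩ := hx w
  exact ⟨M, fun k hk => by simp [hM k hk]⟩

lemma memE.mul_right {x : ℤ → Module.End ℂ W} (A : Module.End ℂ W) (hx : memE W x) :
    memE W (fun k => x k * A) := fun w => by
  obtain ⟨M, hM⟩ := hx (A w)
  exact ⟨M, fun k hk => by simp [hM k hk]⟩

lemma memE.commutator {x : ℤ → Module.End ℂ W} (A : Module.End ℂ W) (hx : memE W x) :
    memE W (fun k => A * x k - x k * A) :=
  (hx.mul_left A).sub (hx.mul_right A)

lemma memE.comp_add_left {x : ℤ → Module.End ℂ W} (c : ℤ) (hx : memE W x) :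
    memE W (fun k => x (c + k)) := fun w => by
  obtain ⟨M, hM⟩ := hx w
  exact ⟨M - c, fun k hk => hM (c + k) (by omega)⟩

lemma memE_of_eq_smul_add_smul {x y z : ℤ → Module.End ℂ W} (s t : ℤ → ℂ)
    (hx : ∀ k, x k = s k • y k + t k • z k) (hy : memE W y) (hz : memE W z) : memE W x :=
  fun w => by
  obtain ⟨M, hM⟩ := hy w
  obtain ⟨M', hM'⟩ := hz w
  exact ⟨max M M', fun k hk => by
    simp [hx k, hM k (le_of_max_le_left hk), hM' k (le_of_max_le_right hk)]⟩

lemma memE0.add {x y : ℤ → Module.End ℂ W} (hx : memE0 N W x) (hy : memE0 N W y) :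
    memE0 N W (x + y) := by
  obtain ⟨p, hp, hpx⟩ := hx
  obtain ⟨q, hq, hqy⟩ := hy
  refine ⟨q * p, mul_ne_zero hq hp, ?_⟩
  rw [polyAct_add, polyAct_mul, hpx, mul_comm, polyAct_mul, hqy, polyAct_zero, polyAct_zero,
    add_zero]

lemma memE0.map {x : ℤ → Module.End ℂ W} (φ : Module.End ℂ (Module.End ℂ W))
    (hx : memE0 N W x) : memE0 N W (fun m => φ (x m)) := by
  obtain ⟨p, hp, hpx⟩ := hx
  refine ⟨p, hp, ?_⟩
  rw [polyAct_map, hpx]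
  exact funext fun _ => map_zero φ

lemma memE0.sub {x y : ℤ → Module.End ℂ W} (hx : memE0 N W x) (hy : memE0 N W y) :
    memE0 N W (x - y) := by
  rw [sub_eq_add_neg]
  exact hx.add (hy.map (-LinearMap.id))

lemma memE0.smul {x : ℤ → Module.End ℂ W} (s : ℂ) (hx : memE0 N W x) : memE0 N W (s • x) := by
  obtain ⟨p, hp, hpx⟩ := hx
  exact ⟨p, hp, by rw [polyAct_smul, hpx, smul_zero]⟩

lemma memE0.comp_add_left {x : ℤ → Module.End ℂ W} (c : ℤ) (hx : memE0 N W x) :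
    memE0 N W (fun m => x (c + m)) := by
  obtain ⟨p, hp, hpx⟩ := hx
  exact ⟨p, hp, by rw [polyAct_comp_add_left, hpx]; rfl⟩

/-- Run the recurrence backwards: its lowest nonzero coefficient determines `u k` from the
values at `k + j * N`, `j > 0`. -/
lemma eq_zero_of_recurrence_of_eventually_zero {V : Type*} [AddCommGroup V] [Module ℂ V]
    {N : ℕ} (hN : 0 < N) {u : ℤ → V} {q : Polynomial ℂ} (hq : q ≠ 0)
    (hrec : ∀ k, ∑ j ∈ Finset.range (q.natDegree + 1), q.coeff j • u (k + j * N) = 0)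
    {M : ℤ} (hev : ∀ k ≥ M, u k = 0) (k : ℤ) : u k = 0 := by
  set t := q.natTrailingDegree
  have hct : q.coeff t ≠ 0 := by
    rwa [← Polynomial.trailingCoeff, Polynomial.trailingCoeff_nonzero_iff_nonzero]
  have htd : t ≤ q.natDegree := q.natTrailingDegree_le_natDegree
  suffices ∀ m : ℕ, ∀ k ≥ M - m, u k = 0 from this (M - k).toNat k (by omega)
  intro m
  induction m with
  | zero => exact fun k hk => hev k (by omega)
  | succ m ih =>
    intro k hk
    have hsingle : ∑ j ∈ Finset.range (q.natDegree + 1), q.coeff j • u (k - t * N + j * N)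
        = q.coeff t • u k := by
      rw [Finset.sum_eq_single t]
      · rw [sub_add_cancel]
      · intro j _ hjt
        rcases lt_or_gt_of_ne hjt with h | h
        · rw [Polynomial.coeff_eq_zero_of_lt_natTrailingDegree h, zero_smul]
        · have h' : (t : ℤ) * N + N ≤ j * N := by
            nlinarith [show (t : ℤ) + 1 ≤ j by exact_mod_cast h]
          rw [ih _ (by omega), smul_zero]
      · exact fun h => absurd (Finset.mem_range.mpr (by omega)) h
    have h := hrec (k - t * N)
    rw [hsingle] at h
    exact (smul_eq_zero.mp h).resolve_left hct

lemma eq_zero_of_memE_of_memE0 (hN : 0 < N) {u : ℤ → Module.End ℂ W} (hE : memE W u)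
    (h0 : memE0 N W u) : u = 0 := by
  obtain ⟨q, hq, hqu⟩ := h0
  funext k
  ext w
  obtain ⟨M, hM⟩ := hE w
  refine eq_zero_of_recurrence_of_eventually_zero hN (u := fun k => u k w) hq (fun k' => ?_) hM k
  have h := congrArg (fun f => f k' w) hqu
  simpa only [polyAct_apply, LinearMap.sum_apply, LinearMap.smul_apply, Pi.zero_apply,
    LinearMap.zero_apply] using h

lemma polyAct_memE_of_commutator_eq {b c₀ c₁ : ℤ → Module.End ℂ W} (A A' : Module.End ℂ W)
    (k : ℤ) (s : ℂ) (h : ∀ l, A * b l - b l * A = c₀ (k + l) + s • c₁ (k + l - N))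
    (h' : ∀ l, A' * b l - b l * A' = c₀ (k + N + l) + (s + 1) • c₁ (k + N + l - N))
    {p : Polynomial ℂ} (hb : memE W (polyAct N W p b)) :
    memE W (polyAct N W p c₀) ∧ memE W (polyAct N W p c₁) := by
  have hc₁ : c₁ = (fun m => A' * b (-k + m) - b (-k + m) * A')
      - fun m => A * b (N - k + m) - b (N - k + m) * A := by
    funext m
    have e := h (N - k + m)
    have e' := h' (-k + m)
    rw [show k + (N - k + m) = k + N + (-k + m) by ring,
      show k + N + (-k + m) - N = m by ring] at e
    rw [show k + N + (-k + m) - N = m by ring] at e'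
    rw [Pi.sub_apply, e, e']
    module
  have hc₀ : c₀ = (fun m => A * b (-k + m) - b (-k + m) * A) - s • fun m => c₁ (-N + m) := by
    funext m
    have e := h (-k + m)
    rw [show k + (-k + m) = m by ring, show m - N = -N + m by ring] at e
    simp [e]
  have hE₁ : memE W (polyAct N W p c₁) := by
    rw [hc₁, polyAct_sub, polyAct_commutator, polyAct_commutator, polyAct_comp_add_left,
      polyAct_comp_add_left]
    exact ((hb.comp_add_left _).commutator A').sub ((hb.comp_add_left _).commutator A)
  refine ⟨?_, hE₁⟩
  rw [hc₀, polyAct_sub, polyAct_commutator, polyAct_comp_add_left, polyAct_smul,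
    polyAct_comp_add_left]
  exact ((hb.comp_add_left _).commutator A).sub ((hE₁.comp_add_left _).smul s)

lemma commutator_eq_of_isProjE_right (hN : 0 < N) {b c₀ c₁ eb e₀ e₁ : ℤ → Module.End ℂ W}
    (A : Module.End ℂ W) (k : ℤ) (s : ℂ)
    (h : ∀ l, A * b l - b l * A = c₀ (k + l) + s • c₁ (k + l - N))
    (hb : IsProjE N W b eb) (h₀ : IsProjE N W c₀ e₀) (h₁ : IsProjE N W c₁ e₁) (l : ℤ) :
    A * eb l - eb l * A = e₀ (k + l) + s • e₁ (k + l - N) := by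
  set F : ℤ → Module.End ℂ W := fun l => A * eb l - eb l * A - e₀ (k + l) - s • e₁ (k - N + l)
  have hFE : memE W F :=
    ((hb.1.commutator A).sub (h₀.1.comp_add_left k)).sub ((h₁.1.comp_add_left (k - N)).smul s)
  have hF0 : memE0 N W F := by
    have hF : F = (fun l => (c₀ - e₀) (k + l)) + (s • fun l => (c₁ - e₁) (k - N + l))
        - fun l => A * (b - eb) l - (b - eb) l * A := by
      funext l
      have e := h l
      rw [show k + l - N = k - N + l by ring] at e
      simp only [F, Pi.add_apply, Pi.sub_apply, Pi.smul_apply, mul_sub, sub_mul]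
      linear_combination (norm := module) e
    rw [hF]
    exact ((h₀.2.comp_add_left k).add ((h₁.2.comp_add_left (k - N)).smul s)).sub
      (hb.2.map (LinearMap.mulLeft ℂ A - LinearMap.mulRight ℂ A))
  have hl := congrFun (eq_zero_of_memE_of_memE0 hN hFE hF0) l
  rw [show k + l - N = k - N + l by ring, ← sub_eq_zero, ← sub_sub]
  exact hl

lemma commutator_eq_of_isProjE_left (hN : 0 < N) {a ea : ℤ → Module.End ℂ W}
    (ha : IsProjE N W a ea) (C : Module.End ℂ W) (hE : memE W fun k => a k * C - C * a k)
    (k : ℤ) : ea k * C - C * ea k = a k * C - C * a k := by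
  set G : ℤ → Module.End ℂ W := fun k => (a - ea) k * C - C * (a - ea) k
  have hG0 : memE0 N W G := ha.2.map (LinearMap.mulRight ℂ C - LinearMap.mulLeft ℂ C)
  have hGE : memE W G := by
    have hG : G = (fun k => a k * C - C * a k) - fun k => ea k * C - C * ea k := by
      funext k
      simp only [G, Pi.sub_apply, sub_mul, mul_sub]
      abel
    rw [hG]
    exact hE.sub ((ha.1.mul_right C).sub (ha.1.mul_left C))
  have hk := congrFun (eq_zero_of_memE_of_memE0 hN hGE hG0) k
  simp only [G, Pi.sub_apply, Pi.zero_apply, sub_mul, mul_sub] at hk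
  linear_combination (norm := module) -hk

theorem statement15_general (N : ℕ) (hN : 0 < N) (W : Type) [AddCommGroup W] [Module ℂ W]
    (i : ℤ) (a b c₀ c₁ : ℤ → Module.End ℂ W)
    (hb : memEbar N W b)
    (hsupp : ∀ k : ℤ, ¬ k % (N : ℤ) = i % (N : ℤ) → a k = 0)
    (hcomm : ∀ (k l : ℤ), k % (N : ℤ) = i % (N : ℤ) →
      a k * b l - b l * a k = c₀ (k + l) + ((k : ℂ) / (N : ℂ)) • c₁ (k + l - N)) :
    (memEbar N W c₀ ∧ memEbar N W c₁) ∧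
    (∀ ea eb e₀ e₁ : ℤ → Module.End ℂ W,
      memE W ea → memE0 N W (a - ea) →
      memE W eb → memE0 N W (b - eb) →
      memE W e₀ → memE0 N W (c₀ - e₀) →
      memE W e₁ → memE0 N W (c₁ - e₁) →
      ∀ (k l : ℤ), k % (N : ℤ) = i % (N : ℤ) →
        ea k * eb l - eb l * ea k = e₀ (k + l) + ((k : ℂ) / (N : ℂ)) • e₁ (k + l - N)) := by
  have hN' : (N : ℂ) ≠ 0 := Nat.cast_ne_zero.mpr hN.ne'
  obtain ⟨p, hp, hpb⟩ := hb
  have hc := polyAct_memE_of_commutator_eq (a i) (a (i + N)) i ((i : ℂ) / N) (hcomm i · rfl)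
    (fun l => by rw [hcomm _ l (Int.add_emod_right i N)]; push_cast; field_simp) hpb
  refine ⟨⟨⟨p, hp, hc.1⟩, ⟨p, hp, hc.2⟩⟩, ?_⟩
  intro ea eb e₀ e₁ heaE hea0 hebE heb0 he₀E he₀0 he₁E he₁0 k l hk
  have hright (k : ℤ) (hk : k % (N : ℤ) = i % N) (l : ℤ) :
      a k * eb l - eb l * a k = e₀ (k + l) + ((k : ℂ) / N) • e₁ (k + l - N) :=
    commutator_eq_of_isProjE_right hN (a k) k _ (hcomm k · hk) ⟨hebE, heb0⟩ ⟨he₀E, he₀0⟩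
      ⟨he₁E, he₁0⟩ l
  have hE : memE W fun k => a k * eb l - eb l * a k := by
    refine memE_of_eq_smul_add_smul (fun k => if k % N = i % N then 1 else 0)
      (fun k => if k % N = i % N then (k : ℂ) / N else 0) (fun k => ?_)
      (he₀E.comp_add_left l) (he₁E.comp_add_left (l - N))
    split_ifs with hk
    · rw [hright k hk l, one_smul, add_comm l k, show l - N + k = k + l - N by ring]
    · simp [hsupp k hk]
  rw [commutator_eq_of_isProjE_left hN ⟨heaE, hea0⟩ (eb l) hE k]
  exact hright k hk l

/-- If `a, b ∈ Ē(W)`, `a` is supported in degrees `≡ i (mod N)`, and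
`[a_k, b_l] = (c₀)_{k+l} + (k/N)(c₁)_{k+l−N}` for all `k ≡ i (mod N)` and all `l`, then
`c₀, c₁ ∈ Ē(W)` and the same commutator identity holds for the projections
`ψ_R(a), ψ_R(b), ψ_R(c₀), ψ_R(c₁)` (each characterized as the unique element `e` of
`E(W)` whose difference with the given series lies in `Ē₀(W)`). -/
theorem statement15 (N : ℕ) (hN : 0 < N) (W : Type) [AddCommGroup W] [Module ℂ W]
    (i : ℤ) (a b c₀ c₁ : ℤ → Module.End ℂ W)
    (ha : memEbar N W a) (hb : memEbar N W b)
    (hsupp : ∀ k : ℤ, ¬ k % (N : ℤ) = i % (N : ℤ) → a k = 0)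
    (hcomm : ∀ (k l : ℤ), k % (N : ℤ) = i % (N : ℤ) →
      a k * b l - b l * a k = c₀ (k + l) + ((k : ℂ) / (N : ℂ)) • c₁ (k + l - N)) :
    (memEbar N W c₀ ∧ memEbar N W c₁) ∧
    (∀ ea eb e₀ e₁ : ℤ → Module.End ℂ W,
      memE W ea → memE0 N W (a - ea) →
      memE W eb → memE0 N W (b - eb) →
      memE W e₀ → memE0 N W (c₀ - e₀) →
      memE W e₁ → memE0 N W (c₁ - e₁) →
      ∀ (k l : ℤ), k % (N : ℤ) = i % (N : ℤ) →
        ea k * eb l - eb l * ea k = e₀ (k + l) + ((k : ℂ) / (N : ℂ)) • e₁ (k + l - N)) :=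
  statement15_general N hN W i a b c₀ c₁ hb hsupp hcomm

end Twisted
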